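/- arXiv:2407.09149 — 2 statements merged into one kernel-verified Lean document; each statement's English description precedes it below -/
import Mathlib

section
/- Let A be a Banach lattice algebra with identity e, let a ∈ A with a ≥ 0, and set aₙ = a ⊓ (n•e) for n ≥ 1. Then for all integers m ≥ n ≥ 1 one has ‖a_m − a_n‖ ≤ ‖a‖²/n; consequently the sequence (aₙ) is norm-Cauchy, it converges in norm to some b ∈ A with b ≥ 0, and b is the supremum of the set {a ⊓ (n•e) : n ≥ 1} in A. -/
/-!
Write `aₙ = a ⊓ n • e`. The identity of a Banach lattice algebra with `‖e‖ = 1` is positive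
(Bernau–Huijsmans): with `p = e⁺`, `q = e⁻`, the relations `e = p - q` and `e` being an identity
give `(p + k • q) * p ≥ p + (k + 1) • q`, so `k • q` stays in the unit ball for all `k` and `q = 0`.
Hence `(aₙ)` increases. For `n ≤ m` put `d = aₘ - aₙ` and `v = n • e - aₙ`: then `d ⊓ v = 0`
and both lie below `m • e`, which forces `v * d = 0`, so `n • d = (aₙ + v) * d = aₙ * d ≤ a * a`.
This gives `‖aₘ - aₙ‖ ≤ ‖a‖² / n`, and a monotone sequence converging in norm converges
to its supremum.
-/

open Filter Topology

section Bilinear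

variable {R M N P : Type*} [CommSemiring R] [AddCommGroup M] [AddCommGroup N] [AddCommGroup P]
  [Module R M] [Module R N] [Module R P] [PartialOrder M] [PartialOrder N] [PartialOrder P]
  [IsOrderedAddMonoid P]

lemma map₂_mono_right [IsOrderedAddMonoid N] {f : M →ₗ[R] N →ₗ[R] P}
    (hf : ∀ x y, 0 ≤ x → 0 ≤ y → 0 ≤ f x y) {x : M} {y z : N} (hx : 0 ≤ x) (h : y ≤ z) :
    f x y ≤ f x z := by
  simpa only [map_sub, sub_nonneg] using hf x (z - y) hx (sub_nonneg.2 h)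

lemma map₂_mono_left [IsOrderedAddMonoid M] {f : M →ₗ[R] N →ₗ[R] P}
    (hf : ∀ x y, 0 ≤ x → 0 ≤ y → 0 ≤ f x y) {x y : M} {z : N} (hz : 0 ≤ z) (h : x ≤ y) :
    f x z ≤ f y z := by
  simpa only [map_sub, LinearMap.sub_apply, sub_nonneg] using hf (y - x) z (sub_nonneg.2 h) hz

end Bilinear

lemma norm_le_norm_of_nonneg_of_le {E : Type*} [NormedAddCommGroup E] [Lattice E]
    [HasSolidNorm E] [IsOrderedAddMonoid E] {x y : E} (hx : 0 ≤ x) (hxy : x ≤ y) :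
    ‖x‖ ≤ ‖y‖ :=
  HasSolidNorm.solid <| by rw [abs_of_nonneg hx, abs_of_nonneg (hx.trans hxy)]; exact hxy

lemma eq_zero_of_forall_norm_nsmul_le {E : Type*} [NormedAddCommGroup E] [NormedSpace ℝ E]
    {q : E} (C : ℝ) (h : ∀ k : ℕ, ‖k • q‖ ≤ C) : q = 0 := by
  refine norm_le_zero_iff.1 <| ge_of_tendsto (tendsto_const_div_atTop_nhds_zero_nat C) ?_
  filter_upwards [eventually_gt_atTop 0] with k hk
  rw [le_div_iff₀' (by exact_mod_cast hk), ← nsmul_eq_mul, ← RCLike.norm_nsmul ℝ]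
  exact h k

lemma cauchySeq_of_dist_le_div {α : Type*} [PseudoMetricSpace α] {u : ℕ → α} (C : ℝ)
    (h : ∀ m n : ℕ, 1 ≤ n → n ≤ m → dist (u m) (u n) ≤ C / n) : CauchySeq u := by
  refine Metric.cauchySeq_iff'.2 fun ε hε => ?_
  obtain ⟨N, hN, hN1⟩ := (((tendsto_const_div_atTop_nhds_zero_nat C).eventually
    (gt_mem_nhds hε)).and (eventually_ge_atTop 1)).exists
  exact ⟨N, fun n hn => (h n N hN1 hn).trans_lt hN⟩

section OrderedAlgebra

variable {A : Type*} [AddCommGroup A] [Lattice A] [IsOrderedAddMonoid A] [Module ℝ A]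
  [PosSMulMono ℝ A] {mul : A →ₗ[ℝ] A →ₗ[ℝ] A} {e : A}

lemma mul_eq_zero_of_inf_eq_zero
    (mul_nonneg : ∀ a b : A, 0 ≤ a → 0 ≤ b → 0 ≤ mul a b)
    (one_mul : ∀ a : A, mul e a = a) (mul_one : ∀ a : A, mul a e = a)
    {x y : A} {c : ℕ} (hx0 : 0 ≤ x) (hy0 : 0 ≤ y) (hxy : x ⊓ y = 0)
    (hxc : x ≤ c • e) (hyc : y ≤ c • e) : mul x y = 0 := by
  refine le_antisymm ?_ (mul_nonneg x y hx0 hy0)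
  obtain rfl | hc := Nat.eq_zero_or_pos c
  · rw [le_antisymm (zero_smul ℕ e ▸ hxc) hx0, map_zero, LinearMap.zero_apply]
  have hcR : (0 : ℝ) < c := Nat.cast_pos.2 hc
  have hle : ∀ {u : A}, mul x y ≤ c • u → (c : ℝ)⁻¹ • mul x y ≤ u := fun h => by
    rw [inv_smul_le_iff_of_pos hcR, Nat.cast_smul_eq_nsmul]; exact h
  have hx : mul x y ≤ c • x := by
    simpa only [map_nsmul, mul_one] using map₂_mono_right mul_nonneg hx0 hyc
  have hy : mul x y ≤ c • y := by
    simpa only [map_nsmul, LinearMap.smul_apply, one_mul] using map₂_mono_left mul_nonneg hy0 hxc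
  have h := le_inf (hle hx) (hle hy)
  rwa [hxy, smul_nonpos_iff_nonpos_of_pos_left (inv_pos.2 hcR)] at h

lemma nsmul_inf_nsmul_sub_inf_nsmul_le_mul_self
    (mul_nonneg : ∀ a b : A, 0 ≤ a → 0 ≤ b → 0 ≤ mul a b)
    (one_mul : ∀ a : A, mul e a = a) (mul_one : ∀ a : A, mul a e = a)
    (he : 0 ≤ e) {a : A} (ha : 0 ≤ a) {m n : ℕ} (hnm : n ≤ m) :
    n • (a ⊓ m • e - a ⊓ n • e) ≤ mul a a := by
  set b := a ⊓ n • e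
  set d := a ⊓ m • e - b
  set v := n • e - b
  have hb0 : 0 ≤ b := le_inf ha (nsmul_nonneg he n)
  have hd0 : 0 ≤ d := sub_nonneg.2 (inf_le_inf_left a (nsmul_le_nsmul_left he hnm))
  have hv0 : 0 ≤ v := sub_nonneg.2 inf_le_right
  have hda : d ≤ a - b := sub_le_sub_right inf_le_left b
  have hvd : v ⊓ d = 0 := by
    refine le_antisymm ?_ (le_inf hv0 hd0)
    calc v ⊓ d ≤ (n • e - b) ⊓ (a - b) := inf_le_inf_left v hda
      _ = 0 := by rw [← inf_sub, inf_comm, sub_self]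
  have hmul : mul v d = 0 :=
    mul_eq_zero_of_inf_eq_zero mul_nonneg one_mul mul_one hv0 hd0 hvd
      ((sub_le_self _ hb0).trans (nsmul_le_nsmul_left he hnm))
      ((sub_le_self _ hb0).trans inf_le_right)
  calc n • d = mul (b + v) d := by
        rw [add_sub_cancel, map_nsmul, LinearMap.smul_apply, one_mul]
    _ = mul b d := by rw [map_add, LinearMap.add_apply, hmul, add_zero]
    _ ≤ mul b a := map₂_mono_right mul_nonneg hb0 (hda.trans (sub_le_self a hb0))
    _ ≤ mul a a := map₂_mono_left mul_nonneg ha inf_le_left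

end OrderedAlgebra

section NormedLatticeAlgebra

variable {A : Type*} [NormedAddCommGroup A] [Lattice A] [HasSolidNorm A] [IsOrderedAddMonoid A]
  [NormedSpace ℝ A] {mul : A →ₗ[ℝ] A →ₗ[ℝ] A} {e : A}

lemma identity_nonneg_of_norm_eq_one
    (norm_mul_le : ∀ a b : A, ‖mul a b‖ ≤ ‖a‖ * ‖b‖)
    (mul_nonneg : ∀ a b : A, 0 ≤ a → 0 ≤ b → 0 ≤ mul a b)
    (one_mul : ∀ a : A, mul e a = a) (mul_one : ∀ a : A, mul a e = a) (norm_e : ‖e‖ = 1) :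
    0 ≤ e := by
  set p := e⁺
  set q := e⁻
  have hpq : p - q = e := posPart_sub_negPart e
  have hp0 : 0 ≤ p := posPart_nonneg e
  have hq0 : 0 ≤ q := negPart_nonneg e
  have hp1 : ‖p‖ ≤ 1 := norm_e ▸ HasSolidNorm.solid (by
    rw [abs_of_nonneg hp0, ← posPart_add_negPart e]; exact le_add_of_nonneg_right hq0)
  set r := q + mul q q
  have hqr : q ≤ r := le_add_of_nonneg_right (mul_nonneg q q hq0 hq0)
  have hqp : mul q p = r := by
    have h := mul_one q
    rwa [← hpq, map_sub, sub_eq_iff_eq_add] at h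
  have hpp : mul p p = p + r := by
    have h₁ := mul_one p
    have h₂ := one_mul q
    rw [← hpq, map_sub, sub_eq_iff_eq_add] at h₁
    rw [← hpq, map_sub, LinearMap.sub_apply, sub_eq_iff_eq_add] at h₂
    rw [h₁, h₂, add_comm p]
  have hbound : ∀ k : ℕ, ∃ x : A, ‖x‖ ≤ 1 ∧ p + k • q ≤ x := by
    intro k
    induction k with
    | zero => exact ⟨p, hp1, by simp⟩
    | succ k ih =>
      obtain ⟨x, hx1, hx⟩ := ih
      refine ⟨mul x p, (norm_mul_le x p).trans (by nlinarith [norm_nonneg x, norm_nonneg p]), ?_⟩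
      calc p + (k + 1) • q ≤ p + (k + 1) • r := by gcongr
        _ = mul p p + k • mul q p := by rw [hpp, hqp, succ_nsmul']; abel
        _ = mul (p + k • q) p := by simp only [map_add, map_nsmul, LinearMap.add_apply,
              LinearMap.smul_apply]
        _ ≤ mul x p := map₂_mono_left mul_nonneg hp0 hx
  have hq : q = 0 := eq_zero_of_forall_norm_nsmul_le 1 fun k => by
    obtain ⟨x, hx1, hx⟩ := hbound k
    exact (norm_le_norm_of_nonneg_of_le (nsmul_nonneg hq0 k)
      ((le_add_of_nonneg_left hp0).trans hx)).trans hx1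
  rw [← hpq, hq, sub_zero]
  exact hp0

lemma norm_inf_nsmul_sub_inf_nsmul_le [PosSMulMono ℝ A]
    (norm_mul_le : ∀ a b : A, ‖mul a b‖ ≤ ‖a‖ * ‖b‖)
    (mul_nonneg : ∀ a b : A, 0 ≤ a → 0 ≤ b → 0 ≤ mul a b)
    (one_mul : ∀ a : A, mul e a = a) (mul_one : ∀ a : A, mul a e = a)
    (he : 0 ≤ e) {a : A} (ha : 0 ≤ a) {m n : ℕ} (hn : 1 ≤ n) (hnm : n ≤ m) :
    ‖a ⊓ m • e - a ⊓ n • e‖ ≤ ‖a‖ ^ 2 / n := by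
  have hd0 : 0 ≤ a ⊓ m • e - a ⊓ n • e :=
    sub_nonneg.2 (inf_le_inf_left a (nsmul_le_nsmul_left he hnm))
  rw [le_div_iff₀' (by exact_mod_cast hn), ← nsmul_eq_mul, ← RCLike.norm_nsmul ℝ, sq]
  exact (norm_le_norm_of_nonneg_of_le (nsmul_nonneg hd0 n)
    (nsmul_inf_nsmul_sub_inf_nsmul_le_mul_self mul_nonneg one_mul mul_one he ha hnm)).trans
    (norm_mul_le a a)

end NormedLatticeAlgebra

theorem inf_with_multiples_of_identity_converges_general
    {A : Type*} [NormedAddCommGroup A] [Lattice A] [HasSolidNorm A] [IsOrderedAddMonoid A]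
    [NormedSpace ℝ A]
    [PosSMulStrictMono ℝ A] [CompleteSpace A]
    (mul : A →ₗ[ℝ] A →ₗ[ℝ] A)
    (norm_mul_le : ∀ a b : A, ‖mul a b‖ ≤ ‖a‖ * ‖b‖)
    (mul_nonneg : ∀ a b : A, 0 ≤ a → 0 ≤ b → 0 ≤ mul a b)
    (e : A) (one_mul : ∀ a : A, mul e a = a) (mul_one : ∀ a : A, mul a e = a)
    (norm_e : ‖e‖ = 1)
    (a : A) (ha : 0 ≤ a) :
    (∀ m n : ℕ, 1 ≤ n → n ≤ m →
      ‖a ⊓ (m • e) - a ⊓ (n • e)‖ ≤ ‖a‖ ^ 2 / (n : ℝ)) ∧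
    CauchySeq (fun n : ℕ => a ⊓ (n • e)) ∧
    ∃ b : A, Filter.Tendsto (fun n : ℕ => a ⊓ (n • e)) Filter.atTop (nhds b) ∧
      0 ≤ b ∧ IsLUB {x : A | ∃ n : ℕ, 1 ≤ n ∧ x = a ⊓ (n • e)} b := by
  have he : 0 ≤ e := identity_nonneg_of_norm_eq_one norm_mul_le mul_nonneg one_mul mul_one norm_e
  have hest : ∀ m n : ℕ, 1 ≤ n → n ≤ m → ‖a ⊓ (m • e) - a ⊓ (n • e)‖ ≤ ‖a‖ ^ 2 / (n : ℝ) :=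
    fun _ _ hn hnm =>
      norm_inf_nsmul_sub_inf_nsmul_le norm_mul_le mul_nonneg one_mul mul_one he ha hn hnm
  have hcauchy : CauchySeq fun n : ℕ => a ⊓ (n • e) :=
    cauchySeq_of_dist_le_div _ fun m n hn hnm => (dist_eq_norm _ _).trans_le (hest m n hn hnm)
  have hmono : Monotone fun n : ℕ => a ⊓ (n • e) :=
    fun _ _ h => inf_le_inf_left a (nsmul_le_nsmul_left he h)
  obtain ⟨b, hb⟩ := cauchySeq_tendsto_of_complete hcauchy
  refine ⟨hest, hcauchy, b, hb, ge_of_tendsto' hb fun n => le_inf ha (nsmul_nonneg he n), ?_, ?_⟩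
  · rintro _ ⟨n, -, rfl⟩
    exact hmono.ge_of_tendsto hb n
  · exact fun w hw => le_of_tendsto hb <| (eventually_ge_atTop 1).mono fun n hn => hw ⟨n, hn, rfl⟩

/-- In a Banach lattice algebra with identity `e`, for `a ≥ 0` the
sequence `aₙ = a ⊓ (n • e)` satisfies `‖a_m − a_n‖ ≤ ‖a‖²/n` for `m ≥ n ≥ 1`; hence it
is norm-Cauchy and converges to some `b ≥ 0` which is the supremum of the `aₙ`. -/
theorem inf_with_multiples_of_identity_converges
    {A : Type*} [NormedAddCommGroup A] [Lattice A] [HasSolidNorm A] [IsOrderedAddMonoid A]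
    [NormedSpace ℝ A]
    [PosSMulStrictMono ℝ A] [PosSMulReflectLT ℝ A] [CompleteSpace A]
    (mul : A →ₗ[ℝ] A →ₗ[ℝ] A)
    (mul_assoc : ∀ a b c : A, mul (mul a b) c = mul a (mul b c))
    (norm_mul_le : ∀ a b : A, ‖mul a b‖ ≤ ‖a‖ * ‖b‖)
    (mul_nonneg : ∀ a b : A, 0 ≤ a → 0 ≤ b → 0 ≤ mul a b)
    (e : A) (one_mul : ∀ a : A, mul e a = a) (mul_one : ∀ a : A, mul a e = a)
    (norm_e : ‖e‖ = 1)
    (a : A) (ha : 0 ≤ a) :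
    (∀ m n : ℕ, 1 ≤ n → n ≤ m →
      ‖a ⊓ (m • e) - a ⊓ (n • e)‖ ≤ ‖a‖ ^ 2 / (n : ℝ)) ∧
    CauchySeq (fun n : ℕ => a ⊓ (n • e)) ∧
    ∃ b : A, Filter.Tendsto (fun n : ℕ => a ⊓ (n • e)) Filter.atTop (nhds b) ∧
      0 ≤ b ∧ IsLUB {x : A | ∃ n : ℕ, 1 ≤ n ∧ x = a ⊓ (n • e)} b :=
  inf_with_multiples_of_identity_converges_general mul norm_mul_le mul_nonneg e one_mul mul_one
    norm_e a ha
end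

section
/- Let A be an order complete Banach lattice algebra, let (p_λ)_{λ∈Λ} be a family of elements of A, each of which is both a left band projection and a right band projection, such that p_α p_β = 0 for α ≠ β and p_α p_α = p_α for all α, and let Γ ⊆ Λ × Λ. Then there exists a unique linear map P : A → A such that for every x ≥ 0, P x = sup({p_α x p_β : (α,β) ∈ Γ} ∪ {0}); moreover this P is a band projection on A, i.e., P ∘ P = P and 0 ≤ P x ≤ x for every x ≥ 0. -/
/-!
The two-sided multiplications `x ↦ p_α x p_β` are band projections whose pairwise composites
vanish, so for `x ≥ 0` the elements `p_α x p_β`, `(α, β) ∈ Γ`, are pairwise disjoint. Their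
supremum is therefore also the supremum of their finite sums, a monotone directed family of linear
maps; such a supremum is additive and positively homogeneous on the positive cone and hence extends
to a linear map. Any linear `P` with the supremum property is a band projection: `p_α x p_β ≤ P x ≤ x`
forces `p_α (P x) p_β = p_α x p_β`, so `P x` has the same supremum as `x`.
-/

open Set

section LatticeOrderedGroup

variable {E : Type*} [AddCommGroup E] [Lattice E] [IsOrderedAddMonoid E]

lemma inf_add_eq_zero {a b c : E} (ha : 0 ≤ a) (hb : 0 ≤ b) (hc : 0 ≤ c)
    (hab : a ⊓ b = 0) (hac : a ⊓ c = 0) : a ⊓ (b + c) = 0 := by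
  refine le_antisymm ?_ (le_inf ha (add_nonneg hb hc))
  have h : a ⊓ (b + c) - b ≤ a ⊓ c :=
    le_inf ((sub_le_self _ hb).trans inf_le_left)
      (sub_le_iff_le_add.2 (add_comm b c ▸ inf_le_right))
  rw [hac, sub_nonpos] at h
  exact hab ▸ le_inf inf_le_left h

variable {ι : Type*} {a : ι → E}

lemma inf_sum_eq_zero (ha : ∀ i, 0 ≤ a i) (hdisj : Pairwise fun i j => a i ⊓ a j = 0)
    {j : ι} {F : Finset ι} (hj : j ∉ F) : a j ⊓ ∑ i ∈ F, a i = 0 := by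
  induction F using Finset.cons_induction with
  | empty => simpa using ha j
  | cons i F _ ih =>
    rw [Finset.mem_cons, not_or] at hj
    rw [Finset.sum_cons]
    exact inf_add_eq_zero (ha j) (ha i) (Finset.sum_nonneg fun k _ => ha k) (hdisj hj.1)
      (ih hj.2)

lemma sum_le_of_pairwise_inf_eq_zero (ha : ∀ i, 0 ≤ a i)
    (hdisj : Pairwise fun i j => a i ⊓ a j = 0) {c : E} (hc : 0 ≤ c) (hle : ∀ i, a i ≤ c)
    (F : Finset ι) : ∑ i ∈ F, a i ≤ c := by
  induction F using Finset.cons_induction with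
  | empty => simpa using hc
  | cons i F hi ih =>
    have hsup : a i + ∑ k ∈ F, a k = a i ⊔ ∑ k ∈ F, a k := by
      simpa [inf_sum_eq_zero ha hdisj hi] using (inf_add_sup (a i) (∑ k ∈ F, a k)).symm
    rw [Finset.sum_cons, hsup]
    exact sup_le (hle i) ih

end LatticeOrderedGroup

lemma IsLUB.range_add_of_monotone {ι E : Type*} [Preorder ι] [IsDirected ι (· ≤ ·)]
    [AddCommGroup E] [PartialOrder E] [IsOrderedAddMonoid E] {u v : ι → E} {a b : E}
    (hu : Monotone u) (hv : Monotone v) (ha : IsLUB (range u) a) (hb : IsLUB (range v) b) :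
    IsLUB (range (u + v)) (a + b) := by
  refine ⟨?_, fun c hc => (ha.add hb).2 ?_⟩
  · rintro _ ⟨i, rfl⟩
    exact add_le_add (ha.1 ⟨i, rfl⟩) (hb.1 ⟨i, rfl⟩)
  · rintro _ ⟨_, ⟨i, rfl⟩, _, ⟨j, rfl⟩, rfl⟩
    obtain ⟨k, hik, hjk⟩ := directed_of (· ≤ ·) i j
    exact (add_le_add (hu hik) (hv hjk)).trans (hc ⟨k, rfl⟩)

lemma LinearMap.ext_of_nonneg {R E M : Type*} [Semiring R] [AddCommGroup E] [Lattice E]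
    [IsOrderedAddMonoid E] [Module R E] [AddCommGroup M] [Module R M] {f g : E →ₗ[R] M}
    (h : ∀ x, 0 ≤ x → f x = g x) : f = g :=
  LinearMap.ext fun x => by
    rw [← posPart_sub_negPart x, map_sub, map_sub, h _ (posPart_nonneg x),
      h _ (negPart_nonneg x)]

lemma sub_eq_sub_of_map_add_nonneg {E M : Type*} [AddCommGroup E] [LE E] [AddCommGroup M]
    (s : E → M) (hadd : ∀ x y, 0 ≤ x → 0 ≤ y → s (x + y) = s x + s y) {a b a' b' : E}
    (ha : 0 ≤ a) (hb : 0 ≤ b) (ha' : 0 ≤ a') (hb' : 0 ≤ b') (h : a - b = a' - b') :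
    s a - s b = s a' - s b' := by
  rw [sub_eq_sub_iff_add_eq_add] at h ⊢
  rw [← hadd _ _ ha hb', ← hadd _ _ ha' hb, h]

section PositiveCone

variable {𝕜 E M : Type*} [Field 𝕜] [LinearOrder 𝕜] [IsStrictOrderedRing 𝕜]
  [AddCommGroup E] [Lattice E] [IsOrderedAddMonoid E] [Module 𝕜 E] [PosSMulMono 𝕜 E]
  [AddCommGroup M] [Module 𝕜 M]
  (s : E → M) (hadd : ∀ x y, 0 ≤ x → 0 ≤ y → s (x + y) = s x + s y)
  (hsmul : ∀ (t : 𝕜) x, 0 < t → 0 ≤ x → s (t • x) = t • s x)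

def LinearMap.ofPositiveCone : E →ₗ[𝕜] M where
  toFun x := s x⁺ - s x⁻
  map_add' x y := by
    have h : (x + y)⁺ - (x + y)⁻ = (x⁺ + y⁺) - (x⁻ + y⁻) := by
      rw [posPart_sub_negPart, ← sub_add_sub_comm, posPart_sub_negPart, posPart_sub_negPart]
    rw [sub_eq_sub_of_map_add_nonneg s hadd (posPart_nonneg _) (negPart_nonneg _)
      (add_nonneg (posPart_nonneg _) (posPart_nonneg _))
      (add_nonneg (negPart_nonneg _) (negPart_nonneg _)) h,
      hadd _ _ (posPart_nonneg _) (posPart_nonneg _),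
      hadd _ _ (negPart_nonneg _) (negPart_nonneg _)]
    abel
  map_smul' t x := by
    rcases lt_trichotomy t 0 with ht | rfl | ht
    · have h : (t • x)⁺ - (t • x)⁻ = (-t) • x⁻ - (-t) • x⁺ := by
        rw [posPart_sub_negPart, neg_smul, neg_smul, sub_neg_eq_add, neg_add_eq_sub, ← smul_sub,
          posPart_sub_negPart]
      have ht' : 0 < -t := neg_pos.2 ht
      rw [RingHom.id_apply, sub_eq_sub_of_map_add_nonneg s hadd (posPart_nonneg _)
        (negPart_nonneg _) (smul_nonneg ht'.le (negPart_nonneg _))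
        (smul_nonneg ht'.le (posPart_nonneg _)) h, hsmul _ _ ht' (negPart_nonneg _),
        hsmul _ _ ht' (posPart_nonneg _), neg_smul, neg_smul, smul_sub]
      abel
    · simp
    · have h : (t • x)⁺ - (t • x)⁻ = t • x⁺ - t • x⁻ := by
        rw [posPart_sub_negPart, ← smul_sub, posPart_sub_negPart]
      rw [RingHom.id_apply, sub_eq_sub_of_map_add_nonneg s hadd (posPart_nonneg _)
        (negPart_nonneg _) (smul_nonneg ht.le (posPart_nonneg _))
        (smul_nonneg ht.le (negPart_nonneg _)) h, hsmul _ _ ht (posPart_nonneg _),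
        hsmul _ _ ht (negPart_nonneg _), smul_sub]

lemma LinearMap.ofPositiveCone_apply_of_nonneg {x : E} (hx : 0 ≤ x) :
    LinearMap.ofPositiveCone s hadd hsmul x = s x := by
  have h0 : s 0 = 0 := by simpa using hadd 0 0 le_rfl le_rfl
  change s x⁺ - s x⁻ = s x
  rw [posPart_eq_self.2 hx, negPart_eq_zero.2 hx, h0, sub_zero]

end PositiveCone

theorem LinearMap.exists_isLUB_range_of_monotone {𝕜 E F ι : Type*} [Field 𝕜] [LinearOrder 𝕜]
    [IsStrictOrderedRing 𝕜] [AddCommGroup E] [Lattice E] [IsOrderedAddMonoid E] [Module 𝕜 E]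
    [PosSMulMono 𝕜 E] [AddCommGroup F] [PartialOrder F] [IsOrderedAddMonoid F] [Module 𝕜 F]
    [PosSMulMono 𝕜 F] [Preorder ι] [IsDirected ι (· ≤ ·)] (f : ι → E →ₗ[𝕜] F)
    (hmono : ∀ x, 0 ≤ x → Monotone fun i => f i x)
    (hlub : ∀ x, 0 ≤ x → ∃ b, IsLUB (Set.range fun i => f i x) b) :
    ∃ P : E →ₗ[𝕜] F, ∀ x, 0 ≤ x → IsLUB (Set.range fun i => f i x) (P x) := by
  choose! s hs using hlub
  refine ⟨LinearMap.ofPositiveCone s (fun x y hx hy => ?_) (fun t x ht hx => ?_), fun x hx => ?_⟩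
  · have h := (hs x hx).range_add_of_monotone (hmono x hx) (hmono y hy) (hs y hy)
    simp only [Pi.add_def, ← map_add] at h
    exact (hs _ (add_nonneg hx hy)).unique h
  · have h := (OrderIso.smulRight ht).isLUB_image'.2 (hs x hx)
    rw [← Set.range_comp] at h
    simp only [Function.comp_def, OrderIso.smulRight_apply, ← map_smul] at h
    exact (hs _ (smul_nonneg ht.le hx)).unique h
  · rw [LinearMap.ofPositiveCone_apply_of_nonneg _ _ _ hx]
    exact hs x hx

section BandProjection

variable {R E : Type*} [Semiring R] [AddCommGroup E] [Module R E]

structure IsBandProjection [PartialOrder E] (P : E →ₗ[R] E) : Prop where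
  idem : ∀ x, P (P x) = P x
  nonneg : ∀ x, 0 ≤ x → 0 ≤ P x
  le_self : ∀ x, 0 ≤ x → P x ≤ x

namespace IsBandProjection

variable [Lattice E] [IsOrderedAddMonoid E] {P Q : E →ₗ[R] E}

lemma monotone (hP : IsBandProjection P) : Monotone P := fun x y hxy => by
  simpa using hP.nonneg (y - x) (sub_nonneg.2 hxy)

lemma map_eq_of_le {x y : E} (hP : IsBandProjection P) (hxy : P x ≤ y) (hy : y ≤ x) :
    P y = P x :=
  le_antisymm (hP.monotone hy) (hP.idem x ▸ hP.monotone hxy)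

lemma inf_eq_zero (hP : IsBandProjection P) (hQ : IsBandProjection Q) (hPQ : ∀ x, P (Q x) = 0)
    {x : E} (hx : 0 ≤ x) : P x ⊓ Q x = 0 := by
  set u := P x ⊓ Q x
  have hu : 0 ≤ u := le_inf (hP.nonneg x hx) (hQ.nonneg x hx)
  have hPu : P u = 0 := le_antisymm (hPQ x ▸ hP.monotone inf_le_right) (hP.nonneg u hu)
  -- `P (P x - u) = P x`, while `P` lies below the identity on `P x - u ≥ 0`; hence `u ≤ 0`.
  have h := hP.le_self (P x - u) (sub_nonneg.2 inf_le_left)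
  rw [map_sub, hP.idem, hPu, sub_zero, le_sub_self_iff] at h
  exact le_antisymm h hu

variable {ι : Type*} {Q : ι → E →ₗ[R] E}

lemma of_isLUB (hQ : ∀ i, IsBandProjection (Q i))
    (hP : ∀ x, 0 ≤ x → IsLUB (range (fun i => Q i x) ∪ {0}) (P x)) : IsBandProjection P := by
  have hle : ∀ x, 0 ≤ x → P x ≤ x := fun x hx => (hP x hx).2 <| by
    rintro _ (⟨i, rfl⟩ | rfl)
    exacts [(hQ i).le_self x hx, hx]
  have hnonneg : ∀ x, 0 ≤ x → 0 ≤ P x := fun x hx => (hP x hx).1 (Or.inr rfl)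
  have hidem : P ∘ₗ P = P := LinearMap.ext_of_nonneg fun x hx => by
    have hfix : ∀ i, Q i (P x) = Q i x := fun i =>
      (hQ i).map_eq_of_le ((hP x hx).1 (Or.inl ⟨i, rfl⟩)) (hle x hx)
    have h := hP (P x) (hnonneg x hx)
    simp only [hfix] at h
    exact h.unique (hP x hx)
  exact ⟨fun x => LinearMap.congr_fun hidem x, hnonneg, hle⟩

lemma upperBounds_range_union_zero (hQ : ∀ i, IsBandProjection (Q i))
    (horth : Pairwise fun i j => ∀ x, Q i (Q j x) = 0) {x : E} (hx : 0 ≤ x) :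
    upperBounds (range (fun i => Q i x) ∪ {0}) =
      upperBounds (range fun F : Finset ι => ∑ i ∈ F, Q i x) := by
  ext c
  simp only [upperBounds_union, upperBounds_singleton, mem_inter_iff, mem_upperBounds,
    forall_mem_range, mem_Ici]
  refine ⟨fun ⟨hle, hc⟩ => sum_le_of_pairwise_inf_eq_zero (fun i => (hQ i).nonneg x hx)
    (fun i j hij => (hQ i).inf_eq_zero (hQ j) (horth hij) hx) hc hle, fun h => ⟨fun i => ?_, ?_⟩⟩
  · simpa using h {i}
  · simpa using h ∅

end IsBandProjection

end BandProjection

theorem existsUnique_linearMap_isLUB_of_orthogonal {𝕜 E ι : Type*} [Field 𝕜] [LinearOrder 𝕜]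
    [IsStrictOrderedRing 𝕜] [AddCommGroup E] [Lattice E] [IsOrderedAddMonoid E] [Module 𝕜 E]
    [PosSMulMono 𝕜 E] (order_complete : ∀ S : Set E, S.Nonempty → BddAbove S → ∃ b, IsLUB S b)
    {Q : ι → E →ₗ[𝕜] E} (hQ : ∀ i, IsBandProjection (Q i))
    (horth : Pairwise fun i j => ∀ x, Q i (Q j x) = 0) :
    ∃! P : E →ₗ[𝕜] E, ∀ x, 0 ≤ x → IsLUB (range (fun i => Q i x) ∪ {0}) (P x) := by
  have hsums : ∀ x, 0 ≤ x → ∃ b, IsLUB (range fun F : Finset ι => ∑ i ∈ F, Q i x) b :=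
    fun x hx => order_complete _ (range_nonempty _) ⟨x, by
      rw [← IsBandProjection.upperBounds_range_union_zero hQ horth hx]
      rintro _ (⟨i, rfl⟩ | rfl)
      exacts [(hQ i).le_self x hx, hx]⟩
  obtain ⟨P, hP⟩ := LinearMap.exists_isLUB_range_of_monotone (fun F => ∑ i ∈ F, Q i)
    (fun x hx F G hFG => by
      simpa only [LinearMap.coe_sum, Finset.sum_apply] using
        Finset.sum_le_sum_of_subset_of_nonneg hFG fun i _ _ => (hQ i).nonneg x hx)
    (by simpa only [LinearMap.coe_sum, Finset.sum_apply] using hsums)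
  have hlub : ∀ x, 0 ≤ x → IsLUB (range (fun i => Q i x) ∪ {0}) (P x) := fun x hx => by
    rw [isLUB_congr (IsBandProjection.upperBounds_range_union_zero hQ horth hx)]
    simpa only [LinearMap.coe_sum, Finset.sum_apply] using hP x hx
  exact ⟨P, hlub, fun P' hP' => LinearMap.ext_of_nonneg fun x hx => (hP' x hx).unique (hlub x hx)⟩

section MulLeftRight

variable {R A : Type*} [CommSemiring R] [AddCommGroup A] [Module R A]
  (mul : A →ₗ[R] A →ₗ[R] A)

def mulLeftRight (a b : A) : A →ₗ[R] A := (mul a).comp (mul.flip b)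

@[simp]
lemma mulLeftRight_apply (a b x : A) : mulLeftRight mul a b x = mul a (mul x b) := rfl

variable {mul} (hassoc : ∀ a b c : A, mul (mul a b) c = mul a (mul b c))
include hassoc

lemma mulLeftRight_mulLeftRight (a b c d x : A) :
    mulLeftRight mul a b (mulLeftRight mul c d x) = mulLeftRight mul (mul a c) (mul d b) x := by
  simp only [mulLeftRight_apply, hassoc]

lemma mulLeftRight_mulLeftRight_eq_zero {a b c d : A} (h : mul a c = 0 ∨ mul d b = 0) (x : A) :
    mulLeftRight mul a b (mulLeftRight mul c d x) = 0 := by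
  rw [mulLeftRight_mulLeftRight hassoc]
  rcases h with h | h <;> simp [h]

lemma isBandProjection_mulLeftRight [PartialOrder A]
    (hmul_nonneg : ∀ a b : A, 0 ≤ a → 0 ≤ b → 0 ≤ mul a b) {a b : A} (ha : 0 ≤ a) (hb : 0 ≤ b)
    (haL : ∀ x, 0 ≤ x → mul a x ≤ x) (hbR : ∀ x, 0 ≤ x → mul x b ≤ x) (haa : mul a a = a)
    (hbb : mul b b = b) : IsBandProjection (mulLeftRight mul a b) where
  idem x := by rw [mulLeftRight_mulLeftRight hassoc, haa, hbb]
  nonneg x hx := hmul_nonneg _ _ ha (hmul_nonneg _ _ hx hb)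
  le_self x hx := (haL _ (hmul_nonneg _ _ hx hb)).trans (hbR x hx)

end MulLeftRight

theorem inner_band_projection_exists_unique_general
    {A : Type*} [NormedAddCommGroup A] [Lattice A] [IsOrderedAddMonoid A]
    [NormedSpace ℝ A]
    [PosSMulStrictMono ℝ A]
    -- order completeness
    (order_complete : ∀ S : Set A, S.Nonempty → BddAbove S → ∃ b : A, IsLUB S b)
    (mul : A →ₗ[ℝ] A →ₗ[ℝ] A)
    (mul_assoc : ∀ a b c : A, mul (mul a b) c = mul a (mul b c))
    (mul_nonneg : ∀ a b : A, 0 ≤ a → 0 ≤ b → 0 ≤ mul a b)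
    {Λ : Type*} (p : Λ → A)
    (hpos : ∀ l, 0 ≤ p l)
    (hL : ∀ l, ∀ x : A, 0 ≤ x → mul (p l) x ≤ x ∧ mul (mul (p l) (p l)) x = mul (p l) x)
    (hR : ∀ l, ∀ x : A, 0 ≤ x → mul x (p l) ≤ x ∧ mul x (mul (p l) (p l)) = mul x (p l))
    (horth : ∀ a b : Λ, a ≠ b → mul (p a) (p b) = 0)
    (hidem : ∀ a : Λ, mul (p a) (p a) = p a)
    (Γ : Set (Λ × Λ)) :
    (∃! P : A →ₗ[ℝ] A, ∀ x : A, 0 ≤ x →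
      IsLUB ({y : A | ∃ ab ∈ Γ, y = mul (p ab.1) (mul x (p ab.2))} ∪ {0}) (P x)) ∧
    ∀ P : A →ₗ[ℝ] A,
      (∀ x : A, 0 ≤ x →
        IsLUB ({y : A | ∃ ab ∈ Γ, y = mul (p ab.1) (mul x (p ab.2))} ∪ {0}) (P x)) →
      (∀ x : A, P (P x) = P x) ∧ (∀ x : A, 0 ≤ x → 0 ≤ P x ∧ P x ≤ x) := by
  set Q : Γ → A →ₗ[ℝ] A := fun ab => mulLeftRight mul (p ab.1.1) (p ab.1.2)
  have hQ : ∀ ab, IsBandProjection (Q ab) := fun ab =>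
    isBandProjection_mulLeftRight mul_assoc mul_nonneg (hpos _) (hpos _)
      (fun x hx => (hL _ x hx).1) (fun x hx => (hR _ x hx).1) (hidem _) (hidem _)
  have hQorth : Pairwise fun ab cd => ∀ x, Q ab (Q cd x) = 0 := by
    rintro ⟨⟨a, b⟩, _⟩ ⟨⟨c, d⟩, _⟩ hne x
    have hne' : a ≠ c ∨ d ≠ b := by
      contrapose! hne
      obtain ⟨rfl, rfl⟩ := hne
      rfl
    exact mulLeftRight_mulLeftRight_eq_zero mul_assoc (hne'.imp (horth a c) (horth d b)) x
  have hset : ∀ x, {y | ∃ ab ∈ Γ, y = mul (p ab.1) (mul x (p ab.2))} = range fun ab => Q ab x :=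
    fun x => by ext; simp [Q, eq_comm]
  simp only [hset]
  refine ⟨existsUnique_linearMap_isLUB_of_orthogonal order_complete hQ hQorth, fun P hP => ?_⟩
  have hPband := IsBandProjection.of_isLUB hQ hP
  exact ⟨hPband.idem, fun x hx => ⟨hPband.nonneg x hx, hPband.le_self x hx⟩⟩

/-- In an order complete Banach lattice algebra, given a family of
pairwise orthogonal left-and-right band projections `(p_λ)` and `Γ ⊆ Λ × Λ`, the map
`x ↦ ⋁_{(α,β)∈Γ} p_α x p_β` (on positive elements) extends to a unique linear map,
which is a band projection. -/
theorem inner_band_projection_exists_unique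
    {A : Type*} [NormedAddCommGroup A] [Lattice A] [HasSolidNorm A] [IsOrderedAddMonoid A]
    [NormedSpace ℝ A]
    [PosSMulStrictMono ℝ A] [PosSMulReflectLT ℝ A] [CompleteSpace A]
    -- order completeness
    (order_complete : ∀ S : Set A, S.Nonempty → BddAbove S → ∃ b : A, IsLUB S b)
    (mul : A →ₗ[ℝ] A →ₗ[ℝ] A)
    (mul_assoc : ∀ a b c : A, mul (mul a b) c = mul a (mul b c))
    (norm_mul_le : ∀ a b : A, ‖mul a b‖ ≤ ‖a‖ * ‖b‖)
    (mul_nonneg : ∀ a b : A, 0 ≤ a → 0 ≤ b → 0 ≤ mul a b)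
    {Λ : Type*} (p : Λ → A)
    (hpos : ∀ l, 0 ≤ p l)
    (hL : ∀ l, ∀ x : A, 0 ≤ x → mul (p l) x ≤ x ∧ mul (mul (p l) (p l)) x = mul (p l) x)
    (hR : ∀ l, ∀ x : A, 0 ≤ x → mul x (p l) ≤ x ∧ mul x (mul (p l) (p l)) = mul x (p l))
    (horth : ∀ a b : Λ, a ≠ b → mul (p a) (p b) = 0)
    (hidem : ∀ a : Λ, mul (p a) (p a) = p a)
    (Γ : Set (Λ × Λ)) :
    (∃! P : A →ₗ[ℝ] A, ∀ x : A, 0 ≤ x →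
      IsLUB ({y : A | ∃ ab ∈ Γ, y = mul (p ab.1) (mul x (p ab.2))} ∪ {0}) (P x)) ∧
    ∀ P : A →ₗ[ℝ] A,
      (∀ x : A, 0 ≤ x →
        IsLUB ({y : A | ∃ ab ∈ Γ, y = mul (p ab.1) (mul x (p ab.2))} ∪ {0}) (P x)) →
      (∀ x : A, P (P x) = P x) ∧ (∀ x : A, 0 ≤ x → 0 ≤ P x ∧ P x ≤ x) :=
  inner_band_projection_exists_unique_general order_complete mul mul_assoc mul_nonneg p hpos hL hR
    horth hidem Γ
end
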